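/- Graph-level soundness of the abstract interpretation: suppose P:[] →* e:ρ. If e:ρ → e':ρ', G in the graph-generating environment semantics, then e → e', G in the graph-generating approximate semantics for P; and if e:ρ ⇓ e':ρ', G, then e ⇓ e', G in the graph-generating approximate semantics for P. -/

import Mathlib

/- Untyped λ-expressions. -/
inductive Exp : Type
  | var : String → Exp
  | app : Exp → Exp → Exp
  | lam : String → Exp → Exp
deriving DecidableEq

namespace Exp

/-- Free variables. -/
def fv : Exp → Finset String
  | var x => {x}
  | app e1 e2 => fv e1 ∪ fv e2
  | lam x e => fv e \ {x}

/-- The set of subexpressions of a λ-expression. -/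
def subexp : Exp → Set Exp
  | var x => {var x}
  | app e1 e2 => insert (app e1 e2) (subexp e1 ∪ subexp e2)
  | lam x e => insert (lam x e) (subexp e)

end Exp

/- Values (closures), environments and states of the environment-based
semantics.  An environment is a (partial) map from variable names to values;
a state `e:ρ` pairs an expression with an environment. -/
inductive Val : Type
  | clos : String → Exp → (String → Option Val) → Val

abbrev Env := String → Option Val
abbrev State := Exp × Env

/-- A value `λx.e:ρ` viewed as a state. -/
def Val.toState : Val → State
  | .clos x e ρ => (Exp.lam x e, ρ)

/-- The λ-expression component of a value. -/
def Val.toExp : Val → Exp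
  | .clos x e _ => Exp.lam x e

def Env.update (ρ : Env) (x : String) (v : Val) : Env :=
  fun y => if y = x then some v else ρ y

def Env.empty : Env := fun _ => none
/-- Arc labels: `=` (eq) and `↓` (dec). -/
inductive Lab : Type
  | eq : Lab
  | dec : Lab
deriving DecidableEq

/-- Name paths; here the nodes of generated size-change graphs are `ε = []`
or single variables `[y]`. -/
abbrev NP := List String
abbrev Arc := NP × Lab × NP
abbrev ArcSet := Set Arc

/-- `id= = {ε =→ ε} ∪ {y =→ y | y ∈ s}`. -/
def idEqS (s : Set String) : ArcSet :=
  {a | a = ([], Lab.eq, []) ∨ ∃ y ∈ s, a = ([y], Lab.eq, [y])}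

/-- `id↓ = {ε ↓→ ε} ∪ {y =→ y | y ∈ s}`. -/
def idDecS (s : Set String) : ArcSet :=
  {a | a = ([], Lab.dec, []) ∨ ∃ y ∈ s, a = ([y], Lab.eq, [y])}

/-- The graph `{x =→ ε} ∪ {x ↓→ y | y ∈ s}` of the variable rule. -/
def varGraphS (x : String) (s : Set String) : ArcSet :=
  {a | a = ([x], Lab.eq, []) ∨ ∃ y ∈ s, a = ([x], Lab.dec, [y])}

/-- `G₁^{-ε/λx.e₀}`: keep arcs between variables, replace `ε r→ z` (`z` a
variable) by `ε ↓→ z`, and, when `x ∉ fv(e₀)`, additionally replace each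
arc `p r→ ε` by `p ↓→ ε`.  (`fve0` is `fv(e₀)`.) -/
def GminusS (x : String) (fve0 : Set String) (G1 : ArcSet) : ArcSet :=
  {a | (∃ (y : String) (r : Lab) (z : String), a = ([y], r, [z]) ∧ ([y], r, [z]) ∈ G1) ∨
       (∃ z : String, a = (([] : NP), Lab.dec, [z]) ∧ ∃ r, (([] : NP), r, [z]) ∈ G1) ∨
       (x ∉ fve0 ∧ ∃ p : NP, a = (p, Lab.dec, ([] : NP)) ∧ ∃ r, (p, r, ([] : NP)) ∈ G1)}

/-- `G₂^{ε↦x}`: `y r→ x` for each `y r→ ε ∈ G₂`, and `ε ↓→ x` for each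
`ε r→ ε ∈ G₂`. -/
def GepsS (x : String) (G2 : ArcSet) : ArcSet :=
  {a | (∃ (y : String) (r : Lab), a = ([y], r, [x]) ∧ ([y], r, ([] : NP)) ∈ G2) ∨
       (a = (([] : NP), Lab.dec, [x]) ∧ ∃ r, (([] : NP), r, ([] : NP)) ∈ G2)}

/-- `∪_{e₀}`: union restricted to arcs whose target is in `fv(e₀) ∪ {ε}`. -/
def unionRS (fve0 : Set String) (A B : ArcSet) : ArcSet :=
  {a | a ∈ A ∪ B ∧ (a.2.2 = ([] : NP) ∨ ∃ y ∈ fve0, a.2.2 = [y])}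

/-- The label set `R(x,z)` used in graph composition. -/
def labelsA (G1 G2 : ArcSet) (x z : NP) : Set Lab :=
  {r | ∃ y s, ((x, r, y) ∈ G1 ∧ (y, s, z) ∈ G2) ∨
              ((x, s, y) ∈ G1 ∧ (y, r, z) ∈ G2)}

/-- Composition `G₁;G₂` of size-change graphs (as arc sets): `x ↓→ z` whenever
`↓ ∈ R(x,z)`, and `x =→ z` whenever `R(x,z) = {=}`. -/
def compA (G1 G2 : ArcSet) : ArcSet :=
  {a | (∃ x z, a = (x, Lab.dec, z) ∧ Lab.dec ∈ labelsA G1 G2 x z) ∨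
       (∃ x z, a = (x, Lab.eq, z) ∧ labelsA G1 G2 x z = {Lab.eq})}
/- The graph-generating environment semantics:
judgements `e:ρ ⇓ v, G` and `e:ρ →x e':ρ', G` (x ∈ {r,d,c}). -/
mutual
  inductive EvalG : State → Val → ArcSet → Prop
    | value (x : String) (e : Exp) (ρ : Env) :
        EvalG (Exp.lam x e, ρ) (Val.clos x e ρ) (idEqS ↑(Exp.lam x e).fv)
    | var {ρ : Env} {x : String} {v : Val} :
        ρ x = some v → EvalG (Exp.var x, ρ) v (varGraphS x ↑v.toExp.fv)
    | apply {s s' : State} {v : Val} {G' G : ArcSet} :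
        CallGc s s' G' → EvalG s' v G → EvalG s v (compA G' G)
  inductive CallGc : State → State → ArcSet → Prop
    | call {e1 e2 : Exp} {ρ ρ0 : Env} {x : String} {e0 : Exp} {v2 : Val}
        {G1 G2 : ArcSet} :
        EvalG (e1, ρ) (Val.clos x e0 ρ0) G1 → EvalG (e2, ρ) v2 G2 →
        CallGc (Exp.app e1 e2, ρ) (e0, Env.update ρ0 x v2)
          (unionRS ↑e0.fv (GminusS x ↑e0.fv G1) (GepsS x G2))
end

inductive CallGr : State → State → ArcSet → Prop
  | oper (e1 e2 : Exp) (ρ : Env) :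
      CallGr (Exp.app e1 e2, ρ) (e1, ρ) (idDecS ↑e1.fv)

inductive CallGd : State → State → ArcSet → Prop
  | opnd {e1 : Exp} {ρ : Env} {v1 : Val} {G1 : ArcSet} (e2 : Exp) :
      EvalG (e1, ρ) v1 G1 → CallGd (Exp.app e1 e2, ρ) (e2, ρ) (idDecS ↑e2.fv)

/-- The graph-generating call relation (union of `→r`, `→d`, `→c`). -/
def CallGAny (s s' : State) (G : ArcSet) : Prop :=
  CallGr s s' G ∨ CallGd s s' G ∨ CallGc s s' G
/- The graph-generating approximate semantics (for a fixed program `P`):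
judgements `e ⇓ e', G` and `e →x e', G` on λ-expressions. -/
mutual
  inductive EvalAG (P : Exp) : Exp → Exp → ArcSet → Prop
    | value (x : String) (e : Exp) :
        EvalAG P (Exp.lam x e) (Exp.lam x e) (idEqS ↑(Exp.lam x e).fv)
    | var {e1 e2 : Exp} {x : String} {e0 v2 : Exp} {G1 G2 : ArcSet} :
        Exp.app e1 e2 ∈ Exp.subexp P →
        EvalAG P e1 (Exp.lam x e0) G1 → EvalAG P e2 v2 G2 →
        EvalAG P (Exp.var x) v2 (varGraphS x ↑v2.fv)
    | apply {a e' v : Exp} {G' G : ArcSet} :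
        CallAGc P a e' G' → EvalAG P e' v G → EvalAG P a v (compA G' G)
  inductive CallAGc (P : Exp) : Exp → Exp → ArcSet → Prop
    | call {e1 e2 : Exp} {x : String} {e0 v2 : Exp} {G1 G2 : ArcSet} :
        EvalAG P e1 (Exp.lam x e0) G1 → EvalAG P e2 v2 G2 →
        CallAGc P (Exp.app e1 e2) e0
          (unionRS ↑e0.fv (GminusS x ↑e0.fv G1) (GepsS x G2))
end

inductive CallAGr (P : Exp) : Exp → Exp → ArcSet → Prop
  | oper (e1 e2 : Exp) : CallAGr P (Exp.app e1 e2) e1 (idDecS ↑e1.fv)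

inductive CallAGd (P : Exp) : Exp → Exp → ArcSet → Prop
  | opnd (e1 e2 : Exp) : CallAGd P (Exp.app e1 e2) e2 (idDecS ↑e2.fv)

/-- The approximate graph-generating call relation (union of `→r`, `→d`, `→c`). -/
def CallAGAny (P : Exp) (e e' : Exp) (G : ArcSet) : Prop :=
  CallAGr P e e' G ∨ CallAGd P e e' G ∨ CallAGc P e e' G

/-- The call relation of the graph-generating environment semantics,
forgetting the graphs. -/
def CallGU (s s' : State) : Prop := ∃ G, CallGAny s s' G

/-!
Every state reachable from `P:[]` satisfies an invariant, `StateSound`: its expression is a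
subexpression of `P`, and every binding `y ↦ v` of its environment, and recursively of the
closures stored there, is one that `(VarAG)` can reproduce: the λ-expression of `v` lies in `P`
and is an abstract value of an operand passed, at some application of `P`, to an abstract `λy`.
Under this invariant each rule of the environment semantics is mirrored by the approximate rule
of the same name with the same graph, since the graphs are built from the expressions alone.
-/

namespace Exp

theorem mem_subexp_self (e : Exp) : e ∈ e.subexp := by
  cases e <;> simp [subexp]

theorem subexp_subset_of_mem {a : Exp} : ∀ {b : Exp}, a ∈ b.subexp → a.subexp ⊆ b.subexp
  | var _, h => by
    rw [subexp, Set.mem_singleton_iff] at h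
    rw [h]
  | app _ _, h => by
    rcases h with rfl | h | h
    · rfl
    · exact (subexp_subset_of_mem h).trans fun _ hz => .inr (.inl hz)
    · exact (subexp_subset_of_mem h).trans fun _ hz => .inr (.inr hz)
  | lam _ _, h => by
    rcases h with rfl | h
    · rfl
    · exact (subexp_subset_of_mem h).trans fun _ hz => .inr hz

theorem app_left_mem_subexp {e₁ e₂ P : Exp} (h : app e₁ e₂ ∈ P.subexp) : e₁ ∈ P.subexp :=
  subexp_subset_of_mem h (Or.inr (Or.inl (mem_subexp_self e₁)))

theorem app_right_mem_subexp {e₁ e₂ P : Exp} (h : app e₁ e₂ ∈ P.subexp) : e₂ ∈ P.subexp :=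
  subexp_subset_of_mem h (Or.inr (Or.inr (mem_subexp_self e₂)))

theorem lam_body_mem_subexp {x : String} {e P : Exp} (h : lam x e ∈ P.subexp) : e ∈ P.subexp :=
  subexp_subset_of_mem h (Or.inr (mem_subexp_self e))

end Exp

/-- The premise of `(VarAG)`. -/
def AbsBinding (P : Exp) (x : String) (w : Exp) : Prop :=
  ∃ e₁ e₂ e₀ G₁ G₂, Exp.app e₁ e₂ ∈ P.subexp ∧
    EvalAG P e₁ (Exp.lam x e₀) G₁ ∧ EvalAG P e₂ w G₂

inductive ValSound (P : Exp) : Val → Prop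
  | clos {x : String} {e : Exp} {ρ : Env} :
      Exp.lam x e ∈ P.subexp →
      (∀ y v, ρ y = some v → ValSound P v) →
      (∀ y v, ρ y = some v → AbsBinding P y v.toExp) →
      ValSound P (Val.clos x e ρ)

def EnvSound (P : Exp) (ρ : Env) : Prop :=
  (∀ y v, ρ y = some v → ValSound P v) ∧ ∀ y v, ρ y = some v → AbsBinding P y v.toExp

def StateSound (P : Exp) (s : State) : Prop :=
  s.1 ∈ P.subexp ∧ EnvSound P s.2

theorem envSound_empty (P : Exp) : EnvSound P Env.empty :=
  ⟨fun _ _ h => (nomatch h), fun _ _ h => (nomatch h)⟩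

theorem Env.update_eq_some {ρ : Env} {x y : String} {v w : Val} (h : ρ.update x v y = some w) :
    y = x ∧ w = v ∨ ρ y = some w := by
  unfold Env.update at h
  split_ifs at h with hyx
  · exact .inl ⟨hyx, (Option.some.inj h).symm⟩
  · exact .inr h

theorem EnvSound.update {P : Exp} {ρ : Env} {x : String} {v : Val} (hρ : EnvSound P ρ)
    (hv : ValSound P v) (hx : AbsBinding P x v.toExp) : EnvSound P (ρ.update x v) := by
  constructor <;> intro y w hy <;> rcases Env.update_eq_some hy with ⟨rfl, rfl⟩ | hy
  exacts [hv, hρ.1 y w hy, hx, hρ.2 y w hy]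

theorem StateSound.of_call {P e₁ e₂ e₀ : Exp} {ρ₀ : Env} {x : String} {v₂ : Val}
    {G₁ G₂ : ArcSet} (happ : Exp.app e₁ e₂ ∈ P.subexp)
    (h₁ : EvalAG P e₁ (Exp.lam x e₀) G₁) (hv₁ : ValSound P (Val.clos x e₀ ρ₀))
    (h₂ : EvalAG P e₂ v₂.toExp G₂) (hv₂ : ValSound P v₂) :
    StateSound P (e₀, ρ₀.update x v₂) := by
  obtain ⟨hlam, hρ₀val, hρ₀bind⟩ := hv₁
  exact ⟨Exp.lam_body_mem_subexp hlam,
    EnvSound.update ⟨hρ₀val, hρ₀bind⟩ hv₂ ⟨e₁, e₂, e₀, G₁, G₂, happ, h₁, h₂⟩⟩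

mutual

theorem EvalG.approx {P : Exp} {s : State} {v : Val} {G : ArcSet} :
    EvalG s v G → StateSound P s → EvalAG P s.1 v.toExp G ∧ ValSound P v
  | .value x e _, hs => ⟨.value x e, .clos hs.1 hs.2.1 hs.2.2⟩
  | .var hx, hs =>
    have ⟨_, _, _, _, _, happ, h₁, h₂⟩ := hs.2.2 _ _ hx
    ⟨.var happ h₁ h₂, hs.2.1 _ _ hx⟩
  | .apply hc he, hs =>
    have ⟨hca, hs'⟩ := CallGc.approx hc hs
    have ⟨hea, hv⟩ := EvalG.approx he hs'
    ⟨.apply hca hea, hv⟩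

theorem CallGc.approx {P : Exp} {s s' : State} {G : ArcSet} :
    CallGc s s' G → StateSound P s → CallAGc P s.1 s'.1 G ∧ StateSound P s'
  | .call h₁ h₂, hs =>
    have ⟨ha₁, hv₁⟩ := EvalG.approx h₁ ⟨Exp.app_left_mem_subexp hs.1, hs.2⟩
    have ⟨ha₂, hv₂⟩ := EvalG.approx h₂ ⟨Exp.app_right_mem_subexp hs.1, hs.2⟩
    ⟨.call ha₁ ha₂, StateSound.of_call hs.1 ha₁ hv₁ ha₂ hv₂⟩

end

theorem CallGAny.approx {P : Exp} {s s' : State} {G : ArcSet} (h : CallGAny s s' G)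
    (hs : StateSound P s) : CallAGAny P s.1 s'.1 G ∧ StateSound P s' := by
  rcases h with ⟨e₁, e₂, _⟩ | ⟨e₂, _⟩ | h
  · exact ⟨.inl (.oper e₁ e₂), Exp.app_left_mem_subexp hs.1, hs.2⟩
  · exact ⟨.inr (.inl (.opnd _ e₂)), Exp.app_right_mem_subexp hs.1, hs.2⟩
  · exact (CallGc.approx h hs).imp_left (Or.inr ∘ Or.inr)

theorem stateSound_of_reachable {P : Exp} {s : State}
    (h : Relation.ReflTransGen CallGU (P, Env.empty) s) : StateSound P s := by
  induction h with
  | refl => exact ⟨Exp.mem_subexp_self P, envSound_empty P⟩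
  | tail _ hstep ih =>
    obtain ⟨G, hG⟩ := hstep
    exact (hG.approx ih).2

/-- Graph-level soundness of the abstract interpretation: every call or
evaluation (with its size-change graph) from a state reachable from `P:[]` is
matched, with the same graph, by the graph-generating approximate
semantics. -/
theorem abstract_interpretation_graphs_sound (P : Exp) (hP : P.fv = ∅) :
    (∀ (e : Exp) (ρ : Env) (e' : Exp) (ρ' : Env) (G : ArcSet),
      Relation.ReflTransGen CallGU (P, Env.empty) (e, ρ) →
      CallGAny (e, ρ) (e', ρ') G → CallAGAny P e e' G) ∧
    (∀ (e : Exp) (ρ : Env) (v : Val) (G : ArcSet),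
      Relation.ReflTransGen CallGU (P, Env.empty) (e, ρ) →
      EvalG (e, ρ) v G → EvalAG P e v.toExp G) :=
  ⟨fun _ _ _ _ _ hr hc => (hc.approx (stateSound_of_reachable hr)).1,
    fun _ _ _ _ hr he => (he.approx (stateSound_of_reachable hr)).1⟩
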